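/- arXiv:2006.04548 — 3 statements merged into one kernel-verified Lean document; each statement's English description precedes it below -/
import Mathlib

section
/- Let ε and η be independent square-integrable random vectors in ℝⁿ and ℝ^D respectively, with E[ε] = 0, E[η] = 0, E[εεᵀ] = σ²·I_n and E[ηηᵀ] = α²·I_D. Then the perturbed MAP estimator w* := (1/σ²)A⁻¹Φ(y + ε) + (1/α²)A⁻¹η satisfies E[(w* − w̄)(w* − w̄)ᵀ] = A⁻¹, i.e. its covariance matrix equals the posterior covariance of the Bayesian linear model. -/
/-!
With `B = σ⁻² A⁻¹ Φ` and `C = α⁻² A⁻¹` the error `w* − w̄ = B ε + C η` is a linear image of the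
stacked noise `ξ = (ε, η)`. Independence and `E[ε] = 0` kill the off-diagonal blocks of
`E[ξ ξᵀ]`, which is therefore `diag(σ² I, α² I)`, so the covariance of `w*` is
`σ² B Bᵀ + α² C Cᵀ = A⁻¹ (σ⁻² Φ Φᵀ + α⁻² I) A⁻¹ = A⁻¹ A A⁻¹ = A⁻¹`.
-/

open Matrix MeasureTheory ProbabilityTheory

theorem Matrix.nonsing_inv_mul_mul_nonsing_inv {n R : Type*} [Fintype n] [DecidableEq n]
    [CommRing R] (A : Matrix n n R) : A⁻¹ * A * A⁻¹ = A⁻¹ := by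
  by_cases h : IsUnit A.det
  · rw [nonsing_inv_mul A h, Matrix.one_mul]
  · rw [nonsing_inv_apply_not_isUnit A h, Matrix.zero_mul, Matrix.zero_mul]

theorem Matrix.fromCols_mul_fromBlocks_zero_mul_transpose {m n₁ n₂ R : Type*} [Fintype n₁]
    [Fintype n₂] [CommRing R] (B : Matrix m n₁ R) (C : Matrix m n₂ R) (S : Matrix n₁ n₁ R)
    (T : Matrix n₂ n₂ R) :
    fromCols B C * fromBlocks S 0 0 T * (fromCols B C)ᵀ = B * S * Bᵀ + C * T * Cᵀ := by
  simp [fromCols_mul_fromBlocks, transpose_fromCols, fromCols_mul_fromRows]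

theorem Matrix.smul_mul_smul_one_mul_transpose_smul {m n K : Type*} [Fintype n] [DecidableEq n]
    [Field K] (c : K) (U : Matrix m n K) :
    ((1 / c) • U) * (c • (1 : Matrix n n K)) * ((1 / c) • U)ᵀ = (1 / c) • (U * Uᵀ) := by
  simp only [transpose_smul, Matrix.smul_mul, Matrix.mul_smul, Matrix.mul_one, smul_smul]
  congr 1
  simpa [mul_assoc] using mul_inv_mul_cancel c⁻¹

theorem perturbation_covariance_eq_nonsing_inv {m n K : Type*} [Fintype m] [DecidableEq m]
    [Fintype n] [DecidableEq n] [Field K] (Φ : Matrix m n K) (s t : K) (A : Matrix m m K)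
    (hA : A = (1 / s) • (Φ * Φᵀ) + (1 / t) • 1) :
    ((1 / s) • (A⁻¹ * Φ)) * (s • (1 : Matrix n n K)) * ((1 / s) • (A⁻¹ * Φ))ᵀ
      + ((1 / t) • A⁻¹) * (t • (1 : Matrix m m K)) * ((1 / t) • A⁻¹)ᵀ = A⁻¹ := by
  have hAinv_symm : (A⁻¹)ᵀ = A⁻¹ := by
    rw [transpose_nonsing_inv, hA]
    simp [transpose_add, transpose_smul]
  calc _ = A⁻¹ * ((1 / s) • (Φ * Φᵀ) + (1 / t) • 1) * A⁻¹ := by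
        rw [smul_mul_smul_one_mul_transpose_smul, smul_mul_smul_one_mul_transpose_smul,
          transpose_mul, hAinv_symm]
        simp only [Matrix.mul_add, Matrix.add_mul, Matrix.mul_smul, Matrix.smul_mul, Matrix.mul_one,
          Matrix.mul_assoc]
    _ = A⁻¹ := by rw [← hA, nonsing_inv_mul_mul_nonsing_inv]

section Moments

variable {Ω ι κ : Type*} [MeasurableSpace Ω] {P : Measure Ω}

noncomputable def crossMoment (P : Measure Ω) (X : Ω → ι → ℝ) (Y : Ω → κ → ℝ) : Matrix ι κ ℝ :=
  Matrix.of fun i l => ∫ ω, X ω i * Y ω l ∂P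

theorem transpose_crossMoment (X : Ω → ι → ℝ) (Y : Ω → κ → ℝ) :
    (crossMoment P X Y)ᵀ = crossMoment P Y X := by
  ext l i
  simp only [crossMoment, transpose_apply, of_apply, mul_comm]

theorem crossMoment_sumElim (X : Ω → ι → ℝ) (Y : Ω → κ → ℝ) :
    crossMoment P (fun ω => Sum.elim (X ω) (Y ω)) (fun ω => Sum.elim (X ω) (Y ω)) =
      fromBlocks (crossMoment P X X) (crossMoment P X Y) (crossMoment P Y X)
        (crossMoment P Y Y) := by
  ext (i | l) (i' | l') <;> rfl

theorem crossMoment_eq_smul_one [DecidableEq ι] {X : Ω → ι → ℝ} {c : ℝ}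
    (hX : ∀ i i', ∫ ω, X ω i * X ω i' ∂P = if i = i' then c else 0) :
    crossMoment P X X = c • 1 := by
  ext i i'
  simp [crossMoment, hX, one_apply]

theorem crossMoment_eq_zero_of_indepFun {X : Ω → ι → ℝ} {Y : Ω → κ → ℝ}
    (hXY : IndepFun X Y P) (hX : ∀ i, AEStronglyMeasurable (X · i) P)
    (hY : ∀ l, AEStronglyMeasurable (Y · l) P) (hX₀ : ∀ i, ∫ ω, X ω i ∂P = 0) :
    crossMoment P X Y = 0 := by
  ext i l
  have hXY_il : IndepFun (X · i) (Y · l) P :=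
    hXY.comp (measurable_pi_apply i) (measurable_pi_apply l)
  rw [Matrix.zero_apply, crossMoment, of_apply,
    hXY_il.integral_fun_mul_eq_mul_integral (hX i) (hY l), hX₀ i, zero_mul]

theorem integral_mulVec_mul_mulVec [Fintype ι] [Fintype κ] {α β : Type*}
    {X : Ω → ι → ℝ} {Y : Ω → κ → ℝ}
    (hX : ∀ i, MemLp (X · i) 2 P) (hY : ∀ l, MemLp (Y · l) 2 P)
    (M : Matrix α ι ℝ) (N : Matrix β κ ℝ) (a : α) (b : β) :
    ∫ ω, (M *ᵥ X ω) a * (N *ᵥ Y ω) b ∂P = (M * crossMoment P X Y * Nᵀ) a b := by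
  have hint : ∀ i l, Integrable (fun ω => M a i * N b l * (X ω i * Y ω l)) P :=
    fun i l => ((hX i).integrable_mul (hY l)).const_mul _
  calc _ = ∫ ω, ∑ i, ∑ l, M a i * N b l * (X ω i * Y ω l) ∂P := by
        simp only [mulVec, dotProduct, Finset.sum_mul_sum]
        congr with ω
        exact Finset.sum_congr rfl fun i _ => Finset.sum_congr rfl fun l _ => by ring
    _ = ∑ i, ∑ l, M a i * N b l * ∫ ω, X ω i * Y ω l ∂P := by
        rw [integral_finsetSum _ fun i _ => integrable_finsetSum _ fun l _ => hint i l]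
        refine Finset.sum_congr rfl fun i _ => ?_
        rw [integral_finsetSum _ fun l _ => hint i l]
        exact Finset.sum_congr rfl fun l _ => integral_const_mul _ _
    _ = _ := by
        simp only [mul_apply, crossMoment, of_apply, transpose_apply, Finset.sum_mul]
        rw [Finset.sum_comm]
        exact Finset.sum_congr rfl fun l _ => Finset.sum_congr rfl fun i _ => by ring

end Moments

theorem covariance_perturbed_map_eq_posterior_covariance_general
    {D n : ℕ} (σ α : ℝ)
    (Φ : Matrix (Fin D) (Fin n) ℝ) (y : Fin n → ℝ)
    (A : Matrix (Fin D) (Fin D) ℝ)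
    (hA : A = (1 / σ ^ 2) • (Φ * Φᵀ) + (1 / α ^ 2) • (1 : Matrix (Fin D) (Fin D) ℝ))
    (wbar : Fin D → ℝ) (hwbar : wbar = (1 / σ ^ 2) • (A⁻¹ *ᵥ (Φ *ᵥ y)))
    {Ω : Type*} [MeasurableSpace Ω] (P : Measure Ω)
    (ε : Ω → Fin n → ℝ) (η : Ω → Fin D → ℝ)
    (hεsq : ∀ i, MemLp (fun ω => ε ω i) 2 P)
    (hηsq : ∀ j, MemLp (fun ω => η ω j) 2 P)
    (hindep : IndepFun ε η P)
    (hεmean : ∀ i, ∫ ω, ε ω i ∂P = 0)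
    (hεcov : ∀ i i', ∫ ω, ε ω i * ε ω i' ∂P = if i = i' then σ ^ 2 else 0)
    (hηcov : ∀ j j', ∫ ω, η ω j * η ω j' ∂P = if j = j' then α ^ 2 else 0)
    (wstar : Ω → Fin D → ℝ)
    (hwstar : ∀ ω, wstar ω =
      (1 / σ ^ 2) • (A⁻¹ *ᵥ (Φ *ᵥ (y + ε ω))) + (1 / α ^ 2) • (A⁻¹ *ᵥ η ω)) :
    ∀ j k, ∫ ω, (wstar ω j - wbar j) * (wstar ω k - wbar k) ∂P = A⁻¹ j k := by
  set ξ : Ω → Fin n ⊕ Fin D → ℝ := fun ω => Sum.elim (ε ω) (η ω)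
  have hξ : ∀ s, MemLp (ξ · s) 2 P := by
    rintro (i | l)
    exacts [hεsq i, hηsq l]
  have hdev : ∀ ω, wstar ω - wbar =
      fromCols ((1 / σ ^ 2) • (A⁻¹ * Φ)) ((1 / α ^ 2) • A⁻¹) *ᵥ ξ ω := fun ω => by
    rw [fromCols_mulVec_sumElim, hwstar, hwbar, smul_mulVec, smul_mulVec,
      ← mulVec_mulVec, mulVec_add, mulVec_add, smul_add]
    abel
  have hεη : crossMoment P ε η = 0 :=
    crossMoment_eq_zero_of_indepFun hindep (fun i => (hεsq i).aestronglyMeasurable)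
      (fun l => (hηsq l).aestronglyMeasurable) hεmean
  have hξξ : crossMoment P ξ ξ = fromBlocks (σ ^ 2 • 1) 0 0 (α ^ 2 • 1) := by
    rw [crossMoment_sumElim, ← transpose_crossMoment ε η, hεη, transpose_zero,
      crossMoment_eq_smul_one hεcov, crossMoment_eq_smul_one hηcov]
  intro j k
  simp_rw [← Pi.sub_apply, hdev]
  rw [integral_mulVec_mul_mulVec hξ hξ, hξξ, fromCols_mul_fromBlocks_zero_mul_transpose,
    perturbation_covariance_eq_nonsing_inv Φ _ _ A hA]

/-- Let `ε` and `η` be independent square-integrable random vectors in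
`ℝⁿ` and `ℝᴰ` with `E[ε] = 0`, `E[η] = 0`, `E[εεᵀ] = σ² I_n` and `E[ηηᵀ] = α² I_D`.
Then the perturbed MAP estimator `w* := (1/σ²) A⁻¹ Φ (y + ε) + (1/α²) A⁻¹ η` satisfies
`E[(w* − w̄)(w* − w̄)ᵀ] = A⁻¹`, i.e. its covariance matrix equals the posterior
covariance of the Bayesian linear model. -/
theorem covariance_perturbed_map_eq_posterior_covariance
    {D n : ℕ} (σ α : ℝ) (hσ : 0 < σ) (hα : 0 < α)
    (Φ : Matrix (Fin D) (Fin n) ℝ) (y : Fin n → ℝ)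
    (A : Matrix (Fin D) (Fin D) ℝ)
    (hA : A = (1 / σ ^ 2) • (Φ * Φᵀ) + (1 / α ^ 2) • (1 : Matrix (Fin D) (Fin D) ℝ))
    (wbar : Fin D → ℝ) (hwbar : wbar = (1 / σ ^ 2) • (A⁻¹ *ᵥ (Φ *ᵥ y)))
    {Ω : Type*} [MeasurableSpace Ω] (P : Measure Ω) [IsProbabilityMeasure P]
    (ε : Ω → Fin n → ℝ) (η : Ω → Fin D → ℝ)
    (hεmeas : Measurable ε) (hηmeas : Measurable η)
    (hεsq : ∀ i, MemLp (fun ω => ε ω i) 2 P)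
    (hηsq : ∀ j, MemLp (fun ω => η ω j) 2 P)
    (hindep : IndepFun ε η P)
    (hεmean : ∀ i, ∫ ω, ε ω i ∂P = 0)
    (hηmean : ∀ j, ∫ ω, η ω j ∂P = 0)
    (hεcov : ∀ i i', ∫ ω, ε ω i * ε ω i' ∂P = if i = i' then σ ^ 2 else 0)
    (hηcov : ∀ j j', ∫ ω, η ω j * η ω j' ∂P = if j = j' then α ^ 2 else 0)
    (wstar : Ω → Fin D → ℝ)
    (hwstar : ∀ ω, wstar ω =
      (1 / σ ^ 2) • (A⁻¹ *ᵥ (Φ *ᵥ (y + ε ω))) + (1 / α ^ 2) • (A⁻¹ *ᵥ η ω)) :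
    ∀ j k, ∫ ω, (wstar ω j - wbar j) * (wstar ω k - wbar k) ∂P = A⁻¹ j k :=
  covariance_perturbed_map_eq_posterior_covariance_general σ α Φ y A hA wbar hwbar P ε η hεsq hηsq
    hindep hεmean hεcov hηcov wstar hwstar
end

section
/- If ε and η are independent random vectors whose laws are the centered multivariate Gaussian measures with covariance matrices σ²·I_n on ℝⁿ and α²·I_D on ℝ^D respectively, then the law of the perturbed MAP estimator w* := (1/σ²)A⁻¹Φ(y + ε) + (1/α²)A⁻¹η is the multivariate Gaussian measure on ℝ^D with mean w̄ and covariance matrix A⁻¹, i.e. w* is distributed exactly according to the Bayesian posterior of the linear model. -/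
/-!
Write `w* = w̄ + M ε + N η` with `M = σ⁻² A⁻¹ Φ` and `N = α⁻² A⁻¹`. Characteristic functions
show that an affine image of a Gaussian vector, and the sum of two independent Gaussian vectors,
are Gaussian, so `w*` is Gaussian with mean `w̄` and covariance
`σ² M Mᵀ + α² N Nᵀ = A⁻¹ (σ⁻² Φ Φᵀ + α⁻² I) A⁻¹ = A⁻¹`.

To bring characteristic functions to bear, the density-defined Gaussian with a positive definite
covariance `S` is identified with `ProbabilityTheory.multivariateGaussian`, the image of the
standard Gaussian `∏ᵢ N(0, 1)` under `x ↦ μ + S^{1/2} x`: the linear change of variables formula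
turns the density of the latter into the former.
-/

open Matrix MeasureTheory ProbabilityTheory

/-- The multivariate Gaussian measure on `ℝᵈ` with mean vector `μ` and covariance
matrix `S`, defined through its density with respect to Lebesgue measure. -/
noncomputable def multivariateGaussian {d : ℕ} (μ : Fin d → ℝ)
    (S : Matrix (Fin d) (Fin d) ℝ) : Measure (Fin d → ℝ) :=
  volume.withDensity fun x =>
    ENNReal.ofReal
      ((Real.sqrt ((2 * Real.pi) ^ d * S.det))⁻¹ *
        Real.exp (-((x - μ) ⬝ᵥ (S⁻¹ *ᵥ (x - μ))) / 2))

open WithLp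
open scoped RealInnerProductSpace

lemma MeasurableEquiv.map_withDensity {α β : Type*} [MeasurableSpace α] [MeasurableSpace β]
    (e : α ≃ᵐ β) (μ : Measure α) (f : α → ENNReal) :
    (μ.withDensity f).map e = (μ.map e).withDensity (f ∘ e.symm) := by
  ext s hs
  rw [e.map_apply, withDensity_apply _ (e.measurable hs), withDensity_apply _ hs,
    e.restrict_map, lintegral_map_equiv]
  simp

section AffineChangeOfVariables

variable {ι : Type*} [Fintype ι] [DecidableEq ι]

noncomputable def Matrix.affineMeasurableEquiv (c : ι → ℝ) (B : Matrix ι ι ℝ)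
    (hB : IsUnit B.det) : (ι → ℝ) ≃ᵐ (ι → ℝ) where
  toFun x := c + B *ᵥ x
  invFun y := B⁻¹ *ᵥ (y - c)
  left_inv x := by simp [mulVec_mulVec, nonsing_inv_mul _ hB]
  right_inv y := by simp [mulVec_mulVec, mul_nonsing_inv _ hB]
  measurable_toFun := show Measurable fun x ↦ c + B *ᵥ x by fun_prop
  measurable_invFun := show Measurable fun y ↦ B⁻¹ *ᵥ (y - c) by fun_prop

lemma map_affine_volume (c : ι → ℝ) {B : Matrix ι ι ℝ} (hB : B.det ≠ 0) :
    volume.map (fun x ↦ c + B *ᵥ x) = ENNReal.ofReal |B.det|⁻¹ • volume := by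
  rw [show (fun x ↦ c + B *ᵥ x) = (c + ·) ∘ toLin' B from rfl,
    ← Measure.map_map (by fun_prop) (by fun_prop), Real.map_matrix_volume_pi_eq_smul_volume_pi hB,
    Measure.map_smul, map_add_left_eq_self, abs_inv]

lemma map_affine_withDensity_ofReal (c : ι → ℝ) {B : Matrix ι ι ℝ} (hB : B.det ≠ 0)
    (f : (ι → ℝ) → ℝ) :
    (volume.withDensity fun x ↦ ENNReal.ofReal (f x)).map (fun x ↦ c + B *ᵥ x) =
      volume.withDensity fun y ↦ ENNReal.ofReal (|B.det|⁻¹ * f (B⁻¹ *ᵥ (y - c))) := by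
  let e := affineMeasurableEquiv c B (isUnit_iff_ne_zero.2 hB)
  change (volume.withDensity _).map e = _
  rw [e.map_withDensity, show volume.map e = _ from map_affine_volume c hB,
    withDensity_smul_measure, ← withDensity_smul' _ _ ENNReal.ofReal_ne_top]
  congr 1 with y
  simp [e, affineMeasurableEquiv, ENNReal.ofReal_mul]

end AffineChangeOfVariables

section DensityGaussian

variable {d : ℕ}

noncomputable def multivariateGaussianPDFReal (μ : Fin d → ℝ) (S : Matrix (Fin d) (Fin d) ℝ)
    (x : Fin d → ℝ) : ℝ :=
  (Real.sqrt ((2 * Real.pi) ^ d * S.det))⁻¹ * Real.exp (-((x - μ) ⬝ᵥ (S⁻¹ *ᵥ (x - μ))) / 2)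

lemma multivariateGaussian_def (μ : Fin d → ℝ) (S : Matrix (Fin d) (Fin d) ℝ) :
    _root_.multivariateGaussian μ S =
      volume.withDensity fun x ↦ ENNReal.ofReal (multivariateGaussianPDFReal μ S x) := rfl

lemma multivariateGaussianPDFReal_zero_one (x : Fin d → ℝ) :
    multivariateGaussianPDFReal 0 1 x = ∏ i, gaussianPDFReal 0 1 (x i) := by
  simp only [multivariateGaussianPDFReal, gaussianPDFReal, Finset.prod_mul_distrib,
    ← Real.exp_sum, det_one, inv_one, one_mulVec, sub_zero, mul_one, NNReal.coe_one,
    Finset.prod_const, Finset.card_univ, Fintype.card_fin, dotProduct, ← Finset.sum_div,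
    Finset.sum_neg_distrib, inv_pow, sq]
  congr 2
  exact (Real.sqrt_eq_iff_mul_self_eq (by positivity) (by positivity)).2
    (by rw [← mul_pow, Real.mul_self_sqrt (by positivity)])

lemma multivariateGaussian_zero_one :
    _root_.multivariateGaussian (0 : Fin d → ℝ) 1 = Measure.pi fun _ ↦ gaussianReal 0 1 := by
  have hint : Integrable (multivariateGaussianPDFReal (0 : Fin d → ℝ) 1) := by
    simp_rw [funext multivariateGaussianPDFReal_zero_one]
    exact Integrable.fintype_prod (f := fun _ ↦ gaussianPDFReal 0 1)
      fun _ ↦ integrable_gaussianPDFReal 0 1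
  have : IsFiniteMeasure (_root_.multivariateGaussian (0 : Fin d → ℝ) 1) :=
    isFiniteMeasure_withDensity_ofReal hint.hasFiniteIntegral
  refine charFun_eq_pi_iff.1 fun t ↦ ?_
  rw [charFun_apply, ← MeasurableEquiv.coe_toLp, integral_map_equiv, multivariateGaussian_def]
  simp_rw [multivariateGaussianPDFReal_zero_one]
  rw [integral_withDensity_eq_integral_toReal_smul (by fun_prop) (by simp)]
  simp_rw [charFun_apply_real, integral_gaussianReal_eq_integral_smul one_ne_zero]
  rw [← integral_fintype_prod_eq_prod]
  congr 1 with x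
  rw [ENNReal.toReal_ofReal (Finset.prod_nonneg fun i _ ↦ gaussianPDFReal_nonneg 0 1 (x i))]
  simp only [MeasurableEquiv.coe_toLp, PiLp.inner_apply, RCLike.inner_apply, conj_trivial,
    Complex.ofReal_sum, Finset.sum_mul, Complex.exp_sum, Complex.real_smul, Complex.ofReal_mul,
    Complex.ofReal_prod, ← Finset.prod_mul_distrib]

lemma multivariateGaussianPDFReal_affine (μ : Fin d → ℝ) (B : Matrix (Fin d) (Fin d) ℝ)
    (x : Fin d → ℝ) :
    |B.det|⁻¹ * multivariateGaussianPDFReal 0 1 (B⁻¹ *ᵥ (x - μ)) =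
      multivariateGaussianPDFReal μ (B * Bᵀ) x := by
  have hquad : (x - μ) ⬝ᵥ ((B * Bᵀ)⁻¹ *ᵥ (x - μ)) = (B⁻¹ *ᵥ (x - μ)) ⬝ᵥ (B⁻¹ *ᵥ (x - μ)) := by
    rw [Matrix.mul_inv_rev, ← transpose_nonsing_inv, ← mulVec_mulVec, dotProduct_mulVec,
      vecMul_transpose]
  have hdet : (B * Bᵀ).det = |B.det| ^ 2 := by
    rw [det_mul, det_transpose, sq_abs, sq]
  simp only [multivariateGaussianPDFReal, hquad, hdet, sub_zero, inv_one, one_mulVec, det_one,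
    mul_one, Real.sqrt_mul (by positivity : (0 : ℝ) ≤ (2 * Real.pi) ^ d),
    Real.sqrt_sq (abs_nonneg _), mul_inv]
  ring

lemma multivariateGaussian_zero_one_map_affine (μ : Fin d → ℝ) {B : Matrix (Fin d) (Fin d) ℝ}
    (hB : B.det ≠ 0) :
    (_root_.multivariateGaussian 0 1).map (fun x ↦ μ + B *ᵥ x) =
      _root_.multivariateGaussian μ (B * Bᵀ) := by
  simp_rw [multivariateGaussian_def, map_affine_withDensity_ofReal μ hB,
    multivariateGaussianPDFReal_affine μ B]

open scoped MatrixOrder in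
lemma multivariateGaussian_eq_map_ofLp (μ : Fin d → ℝ) {S : Matrix (Fin d) (Fin d) ℝ}
    (hS : S.PosDef) :
    _root_.multivariateGaussian μ S =
      (ProbabilityTheory.multivariateGaussian (toLp 2 μ) S).map ofLp := by
  set B := CFC.sqrt S
  have hBB : B * Bᵀ = S := by
    rw [show Bᵀ = B by simpa using (CFC.sqrt_nonneg S).posSemidef.isHermitian.eq,
      CFC.sqrt_mul_sqrt_self S hS.posSemidef.nonneg]
  have hBdet : B.det ≠ 0 := fun h ↦ hS.det_pos.ne' (by rw [← hBB, det_mul, h, zero_mul])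
  conv_lhs => rw [← hBB, ← multivariateGaussian_zero_one_map_affine μ hBdet,
    multivariateGaussian_zero_one]
  rw [ProbabilityTheory.multivariateGaussian, ← map_pi_eq_stdGaussian,
    Measure.map_map (by fun_prop) (by fun_prop), Measure.map_map (by fun_prop) (by fun_prop)]
  rfl

lemma map_eq_multivariateGaussian_iff_hasLaw_toLp {Ω : Type*} [MeasurableSpace Ω]
    {P : Measure Ω} {X : Ω → Fin d → ℝ} (hX : Measurable X) (μ : Fin d → ℝ)
    {S : Matrix (Fin d) (Fin d) ℝ} (hS : S.PosDef) :
    P.map X = _root_.multivariateGaussian μ S ↔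
      HasLaw (toLp 2 ∘ X) (ProbabilityTheory.multivariateGaussian (toLp 2 μ) S) P := by
  rw [multivariateGaussian_eq_map_ofLp μ hS]
  refine ⟨fun h ↦ ⟨by fun_prop, ?_⟩, fun h ↦ ?_⟩
  · rw [← Measure.map_map (by fun_prop) hX, h, Measure.map_map (by fun_prop) (by fun_prop)]
    exact Measure.map_id
  · rw [← h.map_eq, Measure.map_map (by fun_prop) (by fun_prop)]
    rfl

end DensityGaussian

section EuclideanGaussian

variable {ι ι' κ : Type*} [Fintype ι] [Fintype ι'] [Fintype κ]

lemma EuclideanSpace.inner_toLp_mulVec (M : Matrix κ ι ℝ) (x : EuclideanSpace ℝ ι)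
    (t : EuclideanSpace ℝ κ) :
    ⟪toLp 2 (M *ᵥ ofLp x), t⟫ = ⟪x, toLp 2 (Mᵀ *ᵥ ofLp t)⟫ := by
  simp only [EuclideanSpace.inner_eq_star_dotProduct, star_trivial, mulVec_transpose,
    dotProduct_mulVec]

lemma charFun_map_affine (μ : Measure (EuclideanSpace ℝ ι)) (c : EuclideanSpace ℝ κ)
    (M : Matrix κ ι ℝ) (t : EuclideanSpace ℝ κ) :
    charFun (μ.map fun x ↦ c + toLp 2 (M *ᵥ ofLp x)) t =
      Complex.exp (⟪c, t⟫ * Complex.I) * charFun μ (toLp 2 (Mᵀ *ᵥ ofLp t)) := by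
  rw [charFun_apply, charFun_apply, integral_map (by fun_prop) (by fun_prop),
    ← integral_const_mul]
  congr 1 with x
  rw [inner_add_left, EuclideanSpace.inner_toLp_mulVec, Complex.ofReal_add, add_mul,
    Complex.exp_add]

variable [DecidableEq ι] [DecidableEq ι'] [DecidableEq κ]

lemma measurePreserving_affine_multivariateGaussian {μ : EuclideanSpace ℝ ι}
    {S : Matrix ι ι ℝ} (hS : S.PosSemidef) (c : EuclideanSpace ℝ κ) (M : Matrix κ ι ℝ) :
    MeasurePreserving (fun x ↦ c + toLp 2 (M *ᵥ ofLp x))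
      (ProbabilityTheory.multivariateGaussian μ S)
      (ProbabilityTheory.multivariateGaussian (c + toLp 2 (M *ᵥ ofLp μ)) (M * S * Mᵀ)) where
  measurable := by fun_prop
  map_eq := by
    have hMS : (M * S * Mᵀ).PosSemidef := by simpa using hS.mul_mul_conjTranspose_same M
    refine Measure.ext_of_charFun (funext fun t ↦ ?_)
    rw [charFun_map_affine, charFun_multivariateGaussian hS, charFun_multivariateGaussian hMS,
      ← Complex.exp_add]
    congr 1
    have hmean : ⟪toLp 2 (Mᵀ *ᵥ ofLp t), μ⟫ = ⟪t, toLp 2 (M *ᵥ ofLp μ)⟫ := by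
      rw [real_inner_comm, ← EuclideanSpace.inner_toLp_mulVec, real_inner_comm]
    have hcov : (Mᵀ *ᵥ ofLp t) ⬝ᵥ S *ᵥ (Mᵀ *ᵥ ofLp t) = ofLp t ⬝ᵥ (M * S * Mᵀ) *ᵥ ofLp t := by
      simp only [← mulVec_mulVec, dotProduct_mulVec, mulVec_transpose]
    rw [hmean, hcov, inner_add_right, real_inner_comm c]
    push_cast
    ring

lemma IndepFun.hasLaw_add_multivariateGaussian {Ω : Type*} [MeasurableSpace Ω] {P : Measure Ω}
    {X Y : Ω → EuclideanSpace ℝ ι} {μ₁ μ₂ : EuclideanSpace ℝ ι} {S₁ S₂ : Matrix ι ι ℝ}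
    (hS₁ : S₁.PosSemidef) (hS₂ : S₂.PosSemidef)
    (hX : HasLaw X (ProbabilityTheory.multivariateGaussian μ₁ S₁) P)
    (hY : HasLaw Y (ProbabilityTheory.multivariateGaussian μ₂ S₂) P) (hXY : X ⟂ᵢ[P] Y) :
    HasLaw (X + Y) (ProbabilityTheory.multivariateGaussian (μ₁ + μ₂) (S₁ + S₂)) P where
  aemeasurable := hX.aemeasurable.add hY.aemeasurable
  map_eq := by
    have := hX.isProbabilityMeasure
    refine Measure.ext_of_charFun (funext fun t ↦ ?_)
    rw [hXY.charFun_map_add_eq_mul hX.aemeasurable hY.aemeasurable, Pi.mul_apply, hX.map_eq,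
      hY.map_eq, charFun_multivariateGaussian hS₁, charFun_multivariateGaussian hS₂,
      charFun_multivariateGaussian (hS₁.add hS₂), ← Complex.exp_add]
    congr 1
    simp only [inner_add_right, add_mulVec, dotProduct_add]
    push_cast
    ring

lemma IndepFun.hasLaw_affine_add_multivariateGaussian {Ω : Type*} [MeasurableSpace Ω]
    {P : Measure Ω} {X : Ω → EuclideanSpace ℝ ι} {Y : Ω → EuclideanSpace ℝ ι'}
    {μ₁ : EuclideanSpace ℝ ι} {μ₂ : EuclideanSpace ℝ ι'} {S₁ : Matrix ι ι ℝ} {S₂ : Matrix ι' ι' ℝ}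
    (hS₁ : S₁.PosSemidef) (hS₂ : S₂.PosSemidef)
    (hX : HasLaw X (ProbabilityTheory.multivariateGaussian μ₁ S₁) P)
    (hY : HasLaw Y (ProbabilityTheory.multivariateGaussian μ₂ S₂) P) (hXY : X ⟂ᵢ[P] Y)
    (c : EuclideanSpace ℝ κ) (M : Matrix κ ι ℝ) (N : Matrix κ ι' ℝ) :
    HasLaw (fun ω ↦ c + toLp 2 (M *ᵥ ofLp (X ω)) + toLp 2 (N *ᵥ ofLp (Y ω)))
      (ProbabilityTheory.multivariateGaussian
        (c + toLp 2 (M *ᵥ ofLp μ₁) + toLp 2 (N *ᵥ ofLp μ₂)) (M * S₁ * Mᵀ + N * S₂ * Nᵀ)) P := by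
  have hsum := IndepFun.hasLaw_add_multivariateGaussian
    (by simpa using hS₁.mul_mul_conjTranspose_same M)
    (by simpa using hS₂.mul_mul_conjTranspose_same N)
    ((measurePreserving_affine_multivariateGaussian hS₁ c M).comp_hasLaw hX)
    ((measurePreserving_affine_multivariateGaussian hS₂ 0 N).comp_hasLaw hY)
    (hXY.comp (φ := fun x ↦ c + toLp 2 (M *ᵥ ofLp x)) (ψ := fun x ↦ 0 + toLp 2 (N *ᵥ ofLp x))
      (by fun_prop) (by fun_prop))
  simp only [zero_add] at hsum
  exact hsum

end EuclideanGaussian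

lemma posterior_covariance_eq {m n : Type*} [Fintype m] [DecidableEq m] [Fintype n]
    [DecidableEq n] {σ α : ℝ} (hσ : σ ≠ 0) (hα : α ≠ 0) (Φ : Matrix m n ℝ) {A : Matrix m m ℝ}
    (hA : A = (1 / σ ^ 2) • (Φ * Φᵀ) + (1 / α ^ 2) • 1) (hAdet : IsUnit A.det) :
    (1 / σ ^ 2) • (A⁻¹ * Φ) * (σ ^ 2 • (1 : Matrix n n ℝ)) * ((1 / σ ^ 2) • (A⁻¹ * Φ))ᵀ +
      (1 / α ^ 2) • A⁻¹ * (α ^ 2 • (1 : Matrix m m ℝ)) * ((1 / α ^ 2) • A⁻¹)ᵀ = A⁻¹ := by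
  have hAT : A⁻¹ᵀ = A⁻¹ := by
    rw [transpose_nonsing_inv, hA]
    simp [transpose_add, transpose_smul, transpose_mul]
  calc _ = A⁻¹ * ((1 / σ ^ 2) • (Φ * Φᵀ) + (1 / α ^ 2) • 1) * A⁻¹ := by
        simp only [transpose_smul, transpose_mul, hAT, Matrix.smul_mul, Matrix.mul_smul,
          smul_smul, Matrix.mul_one, Matrix.mul_add, Matrix.add_mul, Matrix.mul_assoc]
        congr 2 <;> field_simp
    _ = A⁻¹ := by rw [← hA, nonsing_inv_mul _ hAdet, Matrix.one_mul]

theorem law_perturbed_map_eq_posterior_general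
    {D n : ℕ} (σ α : ℝ) (hσ : 0 < σ) (hα : 0 < α)
    (Φ : Matrix (Fin D) (Fin n) ℝ) (y : Fin n → ℝ)
    (A : Matrix (Fin D) (Fin D) ℝ)
    (hA : A = (1 / σ ^ 2) • (Φ * Φᵀ) + (1 / α ^ 2) • (1 : Matrix (Fin D) (Fin D) ℝ))
    (wbar : Fin D → ℝ) (hwbar : wbar = (1 / σ ^ 2) • (A⁻¹ *ᵥ (Φ *ᵥ y)))
    {Ω : Type*} [MeasurableSpace Ω] (P : Measure Ω)
    (ε : Ω → Fin n → ℝ) (η : Ω → Fin D → ℝ)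
    (hεmeas : Measurable ε) (hηmeas : Measurable η)
    (hεlaw : Measure.map ε P = _root_.multivariateGaussian 0 (σ ^ 2 • (1 : Matrix (Fin n) (Fin n) ℝ)))
    (hηlaw : Measure.map η P = _root_.multivariateGaussian 0 (α ^ 2 • (1 : Matrix (Fin D) (Fin D) ℝ)))
    (hindep : IndepFun ε η P)
    (wstar : Ω → Fin D → ℝ)
    (hwstar : ∀ ω, wstar ω =
      (1 / σ ^ 2) • (A⁻¹ *ᵥ (Φ *ᵥ (y + ε ω))) + (1 / α ^ 2) • (A⁻¹ *ᵥ η ω)) :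
    Measure.map wstar P = multivariateGaussian wbar A⁻¹ := by
  have hΦ : (Φ * Φᵀ).PosSemidef := by simpa using posSemidef_self_mul_conjTranspose Φ
  have hA_pos : A.PosDef := hA ▸ PosDef.posSemidef_add
    (hΦ.smul (by positivity : (0 : ℝ) ≤ 1 / σ ^ 2)) (PosDef.one.smul (by positivity : (0 : ℝ) < 1 / α ^ 2))
  have hσI : (σ ^ 2 • (1 : Matrix (Fin n) (Fin n) ℝ)).PosDef := PosDef.one.smul (by positivity)
  have hαI : (α ^ 2 • (1 : Matrix (Fin D) (Fin D) ℝ)).PosDef := PosDef.one.smul (by positivity)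
  set M := (1 / σ ^ 2) • (A⁻¹ * Φ)
  set N := (1 / α ^ 2) • A⁻¹
  have hsplit : wstar = fun ω ↦ wbar + M *ᵥ ε ω + N *ᵥ η ω := by
    funext ω
    simp only [hwstar, hwbar, M, N, mulVec_add, smul_add, smul_mulVec, mulVec_mulVec]
  have hlaw := IndepFun.hasLaw_affine_add_multivariateGaussian hσI.posSemidef hαI.posSemidef
    ((map_eq_multivariateGaussian_iff_hasLaw_toLp hεmeas 0 hσI).1 hεlaw)
    ((map_eq_multivariateGaussian_iff_hasLaw_toLp hηmeas 0 hαI).1 hηlaw)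
    (hindep.comp (by fun_prop) (by fun_prop)) (toLp 2 wbar) M N
  rw [map_eq_multivariateGaussian_iff_hasLaw_toLp (hsplit ▸ by fun_prop) wbar hA_pos.inv,
    ← posterior_covariance_eq hσ.ne' hα.ne' Φ hA ((isUnit_iff_isUnit_det A).1 hA_pos.isUnit)]
  convert hlaw using 2
  · simp [hsplit]
  · simp

/-- If `ε` and `η` are independent random vectors whose laws are the
centered multivariate Gaussian measures with covariance matrices `σ² I_n` on `ℝⁿ` and
`α² I_D` on `ℝᴰ` respectively, then the law of the perturbed MAP estimator
`w* := (1/σ²) A⁻¹ Φ (y + ε) + (1/α²) A⁻¹ η` is the multivariate Gaussian measure on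
`ℝᴰ` with mean `w̄` and covariance matrix `A⁻¹`: `w*` is distributed exactly according
to the Bayesian posterior of the linear model. -/
theorem law_perturbed_map_eq_posterior
    {D n : ℕ} (σ α : ℝ) (hσ : 0 < σ) (hα : 0 < α)
    (Φ : Matrix (Fin D) (Fin n) ℝ) (y : Fin n → ℝ)
    (A : Matrix (Fin D) (Fin D) ℝ)
    (hA : A = (1 / σ ^ 2) • (Φ * Φᵀ) + (1 / α ^ 2) • (1 : Matrix (Fin D) (Fin D) ℝ))
    (wbar : Fin D → ℝ) (hwbar : wbar = (1 / σ ^ 2) • (A⁻¹ *ᵥ (Φ *ᵥ y)))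
    {Ω : Type*} [MeasurableSpace Ω] (P : Measure Ω) [IsProbabilityMeasure P]
    (ε : Ω → Fin n → ℝ) (η : Ω → Fin D → ℝ)
    (hεmeas : Measurable ε) (hηmeas : Measurable η)
    (hεlaw : Measure.map ε P = _root_.multivariateGaussian 0 (σ ^ 2 • (1 : Matrix (Fin n) (Fin n) ℝ)))
    (hηlaw : Measure.map η P = _root_.multivariateGaussian 0 (α ^ 2 • (1 : Matrix (Fin D) (Fin D) ℝ)))
    (hindep : IndepFun ε η P)
    (wstar : Ω → Fin D → ℝ)
    (hwstar : ∀ ω, wstar ω =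
      (1 / σ ^ 2) • (A⁻¹ *ᵥ (Φ *ᵥ (y + ε ω))) + (1 / α ^ 2) • (A⁻¹ *ᵥ η ω)) :
    Measure.map wstar P = multivariateGaussian wbar A⁻¹ :=
  law_perturbed_map_eq_posterior_general σ α hσ hα Φ y A hA wbar hwbar P ε η hεmeas hηmeas hεlaw
    hηlaw hindep wstar hwstar
end

section
/- In the Gaussian regression model, let ε₁,…,εₙ and η₁,…,ηₘ be integrable real random variables with E[ε_i] = 0 for all i and E[η_j] = 0 for all j, and let L̃ be the (random) perturbed joint log-likelihood built from ε and η. Then for every fixed θ ∈ ℝᵐ, the expectation of the perturbed gradient equals the unperturbed gradient: E[∇L̃(θ)] = ∇L(θ). -/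
/-!
Expanding the squares,
`L̃ θ = L θ + ∑ i, εᵢ (fᵢ θ - yᵢ - εᵢ / 2) / σ² + ∑ j, ηⱼ (θⱼ - ηⱼ / 2) / α²`,
so `∇L̃ θ = ∇L θ + ∑ i, εᵢ • ∇fᵢ θ / σ² + η / α²` is affine in the perturbations,
and taking expectations kills the mean-zero terms.
-/

open MeasureTheory InnerProductSpace

section GradientCalculus

variable {F : Type*} [NormedAddCommGroup F] [InnerProductSpace ℝ F] [CompleteSpace F]
  {f g : F → ℝ} {f' g' x : F}

theorem HasGradientAt.add (hf : HasGradientAt f f' x) (hg : HasGradientAt g g' x) :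
    HasGradientAt (fun x => f x + g x) (f' + g') x := by
  rw [hasGradientAt_iff_hasFDerivAt, map_add]
  exact hf.hasFDerivAt.add hg.hasFDerivAt

theorem HasGradientAt.const_mul (c : ℝ) (hf : HasGradientAt f f' x) :
    HasGradientAt (fun x => c * f x) (c • f') x := by
  rw [hasGradientAt_iff_hasFDerivAt, map_smul]
  exact hf.hasFDerivAt.const_mul c

theorem HasGradientAt.sub_const (c : ℝ) (hf : HasGradientAt f f' x) :
    HasGradientAt (fun x => f x - c) f' x :=
  hasGradientAt_iff_hasFDerivAt.2 (hf.hasFDerivAt.sub_const c)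

theorem HasGradientAt.sum {ι : Type*} (s : Finset ι) {f : ι → F → ℝ} {f' : ι → F}
    (hf : ∀ i ∈ s, HasGradientAt (f i) (f' i) x) :
    HasGradientAt (fun x => ∑ i ∈ s, f i x) (∑ i ∈ s, f' i) x := by
  rw [hasGradientAt_iff_hasFDerivAt, map_sum]
  exact HasFDerivAt.fun_sum fun i hi => (hf i hi).hasFDerivAt

end GradientCalculus

theorem EuclideanSpace.hasGradientAt_apply {ι : Type*} [Fintype ι] [DecidableEq ι] (j : ι)
    (x : EuclideanSpace ℝ ι) :
    HasGradientAt (fun x : EuclideanSpace ℝ ι => x j) (EuclideanSpace.single j 1) x := by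
  have hdual : toDual ℝ (EuclideanSpace ℝ ι) (EuclideanSpace.single j 1) =
      EuclideanSpace.proj j := by
    ext v
    simp [EuclideanSpace.inner_single_left]
  rw [hasGradientAt_iff_hasFDerivAt, hdual]
  exact (EuclideanSpace.proj j : EuclideanSpace ℝ ι →L[ℝ] ℝ).hasFDerivAt

theorem sq_sub_div_eq (a e s : ℝ) :
    (a - e) ^ 2 / (2 * s ^ 2) = a ^ 2 / (2 * s ^ 2) - e * ((s ^ 2)⁻¹ * (a - e / 2)) := by
  ring

theorem integral_sum_smul_eq_zero {Ω ι E : Type*} [MeasurableSpace Ω] {P : Measure Ω}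
    [Fintype ι] [NormedAddCommGroup E] [NormedSpace ℝ E] [CompleteSpace E] (X : ι → Ω → ℝ) (u : ι → E)
    (hX : ∀ k, Integrable (X k) P) (hmean : ∀ k, ∫ ω, X k ω ∂P = 0) :
    ∫ ω, ∑ k, X k ω • u k ∂P = 0 := by
  rw [integral_finsetSum _ fun k _ => (hX k).smul_const (u k)]
  simp only [integral_smul_const, hmean, zero_smul, Finset.sum_const_zero]

theorem gradient_perturbed_logLik {n m : ℕ} (σ α : ℝ) (y : Fin n → ℝ)
    (f : Fin n → EuclideanSpace ℝ (Fin m) → ℝ) (hf : ∀ i, Differentiable ℝ (f i))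
    (L : EuclideanSpace ℝ (Fin m) → ℝ)
    (hL : ∀ θ, L θ = -(∑ i, (f i θ - y i) ^ 2 / (2 * σ ^ 2))
      - ∑ j, (θ j) ^ 2 / (2 * α ^ 2))
    (e : Fin n → ℝ) (v : EuclideanSpace ℝ (Fin m)) (Lt : EuclideanSpace ℝ (Fin m) → ℝ)
    (hLt : ∀ θ, Lt θ = -(∑ i, (f i θ - y i - e i) ^ 2 / (2 * σ ^ 2))
      - ∑ j, (θ j - v j) ^ 2 / (2 * α ^ 2))
    (θ : EuclideanSpace ℝ (Fin m)) :
    gradient Lt θ = gradient L θ + (∑ i, e i • (σ ^ 2)⁻¹ • gradient (f i) θ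
      + ∑ j, v j • (α ^ 2)⁻¹ • EuclideanSpace.single j 1) := by
  have hLθ : HasGradientAt L (gradient L θ) θ := by
    have hLd : Differentiable ℝ L := by rw [funext hL]; fun_prop
    exact (hLd θ).hasGradientAt
  have hsplit : Lt = fun θ => L θ + (∑ i, e i * ((σ ^ 2)⁻¹ * (f i θ - y i - e i / 2))
      + ∑ j, v j * ((α ^ 2)⁻¹ * (θ j - v j / 2))) := by
    funext θ
    rw [hLt, hL, Finset.sum_congr rfl fun i _ => sq_sub_div_eq (f i θ - y i) (e i) σ,
      Finset.sum_congr rfl fun j _ => sq_sub_div_eq (θ j) (v j) α,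
      Finset.sum_sub_distrib, Finset.sum_sub_distrib]
    ring
  rw [hsplit]
  refine (hLθ.add ((HasGradientAt.sum _ fun i _ => ?_).add
    (HasGradientAt.sum _ fun j _ => ?_))).gradient
  · exact ((((hf i θ).hasGradientAt.sub_const _).sub_const _).const_mul _).const_mul _
  · exact (((EuclideanSpace.hasGradientAt_apply j θ).sub_const _).const_mul _).const_mul _

theorem expectation_perturbed_gradient_general
    {n m : ℕ}
    (σ α : ℝ)
    (y : Fin n → ℝ)
    (f : Fin n → EuclideanSpace ℝ (Fin m) → ℝ)
    (hf : ∀ i, ContDiff ℝ 2 (f i))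
    (L : EuclideanSpace ℝ (Fin m) → ℝ)
    (hL : ∀ θ, L θ = -(∑ i, (f i θ - y i) ^ 2 / (2 * σ ^ 2))
      - ∑ j, (θ j) ^ 2 / (2 * α ^ 2))
    {Ω : Type*} [MeasurableSpace Ω] (P : Measure Ω) [IsProbabilityMeasure P]
    (ε : Ω → Fin n → ℝ) (η : Ω → EuclideanSpace ℝ (Fin m))
    (hεint : ∀ i, Integrable (fun ω => ε ω i) P)
    (hηint : ∀ j, Integrable (fun ω => η ω j) P)
    (hεmean : ∀ i, ∫ ω, ε ω i ∂P = 0)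
    (hηmean : ∀ j, ∫ ω, η ω j ∂P = 0)
    (Lt : Ω → EuclideanSpace ℝ (Fin m) → ℝ)
    (hLt : ∀ ω θ, Lt ω θ = -(∑ i, (f i θ - y i - ε ω i) ^ 2 / (2 * σ ^ 2))
      - ∑ j, (θ j - η ω j) ^ 2 / (2 * α ^ 2)) :
    ∀ θ, ∫ ω, gradient (Lt ω) θ ∂P = gradient L θ := by
  intro θ
  set a : Fin n → EuclideanSpace ℝ (Fin m) := fun i => (σ ^ 2)⁻¹ • gradient (f i) θ
  set b : Fin m → EuclideanSpace ℝ (Fin m) := fun j => (α ^ 2)⁻¹ • EuclideanSpace.single j 1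
  have hgrad : ∀ ω, gradient (Lt ω) θ =
      gradient L θ + (∑ i, ε ω i • a i + ∑ j, η ω j • b j) := fun ω =>
    gradient_perturbed_logLik σ α y f (fun i => (hf i).differentiable (by norm_num)) L hL
      (ε ω) (η ω) (Lt ω) (hLt ω) θ
  have hεa : Integrable (fun ω => ∑ i, ε ω i • a i) P :=
    integrable_finsetSum _ fun i _ => (hεint i).smul_const (a i)
  have hηb : Integrable (fun ω => ∑ j, η ω j • b j) P :=
    integrable_finsetSum _ fun j _ => (hηint j).smul_const (b j)
  calc ∫ ω, gradient (Lt ω) θ ∂P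
      = ∫ ω, gradient L θ + (∑ i, ε ω i • a i + ∑ j, η ω j • b j) ∂P :=
        integral_congr_ae (ae_of_all _ hgrad)
    _ = gradient L θ + ((∫ ω, ∑ i, ε ω i • a i ∂P) + ∫ ω, ∑ j, η ω j • b j ∂P) := by
        rw [integral_add (integrable_const _) (hεa.fun_add hηb), integral_add hεa hηb,
          integral_const, probReal_univ, one_smul]
    _ = gradient L θ := by
        rw [integral_sum_smul_eq_zero (fun i ω => ε ω i) a hεint hεmean,
          integral_sum_smul_eq_zero (fun j ω => η ω j) b hηint hηmean, add_zero, add_zero]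

/-- In the Gaussian regression model, let `ε₁,…,εₙ` and `η₁,…,ηₘ` be
integrable real random variables with zero mean, and let `L̃` be the (random) perturbed
joint log-likelihood built from `ε` and `η`.  Then for every fixed `θ ∈ ℝᵐ`, the
expectation of the perturbed gradient equals the unperturbed gradient:
`E[∇L̃ θ] = ∇L θ`. -/
theorem expectation_perturbed_gradient
    {n m : ℕ} (hn : 1 ≤ n) (hm : 1 ≤ m)
    (σ α : ℝ) (hσ : 0 < σ) (hα : 0 < α)
    (y : Fin n → ℝ)
    (f : Fin n → EuclideanSpace ℝ (Fin m) → ℝ)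
    (hf : ∀ i, ContDiff ℝ 2 (f i))
    (L : EuclideanSpace ℝ (Fin m) → ℝ)
    (hL : ∀ θ, L θ = -(∑ i, (f i θ - y i) ^ 2 / (2 * σ ^ 2))
      - ∑ j, (θ j) ^ 2 / (2 * α ^ 2))
    {Ω : Type*} [MeasurableSpace Ω] (P : Measure Ω) [IsProbabilityMeasure P]
    (ε : Ω → Fin n → ℝ) (η : Ω → EuclideanSpace ℝ (Fin m))
    (hεint : ∀ i, Integrable (fun ω => ε ω i) P)
    (hηint : ∀ j, Integrable (fun ω => η ω j) P)
    (hεmean : ∀ i, ∫ ω, ε ω i ∂P = 0)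
    (hηmean : ∀ j, ∫ ω, η ω j ∂P = 0)
    (Lt : Ω → EuclideanSpace ℝ (Fin m) → ℝ)
    (hLt : ∀ ω θ, Lt ω θ = -(∑ i, (f i θ - y i - ε ω i) ^ 2 / (2 * σ ^ 2))
      - ∑ j, (θ j - η ω j) ^ 2 / (2 * α ^ 2)) :
    ∀ θ, ∫ ω, gradient (Lt ω) θ ∂P = gradient L θ :=
  expectation_perturbed_gradient_general σ α y f hf L hL P ε η hεint hηint hεmean hηmean Lt hLt
end
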